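/- arXiv:0909.0279 — 5 statements merged into one kernel-verified Lean document; each statement's English description precedes it below -/
import Mathlib

section
/- Let w = a_1 a_2 ⋯ a_k (with k ≥ 1) be a nonempty word in which each letter a_s equals x_{r_s} or x_{r_s}^{-1} for some natural number r_s, and suppose that for every s < k either r_{s+1} = r_s + 1 or r_{s+1} = r_s − 1. Then w represents a nontrivial element of Thompson's group F. -/
/-!
A word is a list of letters `(i, b)`, standing for `x_i` if `b` and for `x_i⁻¹` otherwise.
Let `m` be the least index occurring in the word `w`.

If the exponent sum of `x_m` in `w` is nonzero, `w` is detected by the action of `F` on `ℚ` in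
which `x_i` fixes `(-∞, i - 1]`, maps `[i - 1, i + 1]` affinely onto `[i - 1, i]` and translates
`[i + 1, ∞)` by `-1`: just to the right of `m - 1` only the letters `x_m^{±1}` move points, each
halving or doubling the distance to `m - 1`.

Otherwise the relations `x_j x_m = x_m x_{j+1}` (`m < j`) conjugate `w` to a shorter word.
Consecutive indices force every letter `x_m^{±1}` to sit between letters of index `m + 1`, so the
shorter word is nonempty and again has consecutive indices, and induction on the length applies.
-/

/-- The relators of Thompson's group `F` in its standard infinite presentation
`⟨x_0, x_1, x_2, … ∣ x_i⁻¹ x_j x_i = x_{j+1} for i < j⟩`. -/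
def ThompsonRels : Set (FreeGroup ℕ) :=
  {r | ∃ i j : ℕ, i < j ∧
    r = (FreeGroup.of i)⁻¹ * FreeGroup.of j * FreeGroup.of i * (FreeGroup.of (j + 1))⁻¹}

/-- Thompson's group `F`, as the presented group on the above relators. -/
abbrev ThompsonF : Type := PresentedGroup ThompsonRels

/-- The generator `x_k` of Thompson's group `F`. -/
def xF (k : ℕ) : ThompsonF := PresentedGroup.of k

namespace Thompson

theorem xF_inv_mul_xF_mul_xF {i j : ℕ} (h : i < j) : (xF i)⁻¹ * xF j * xF i = xF (j + 1) := by
  have := PresentedGroup.one_of_mem (rels := ThompsonRels) ⟨i, j, h, rfl⟩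
  simpa [xF, PresentedGroup.of, mul_inv_eq_one] using this

def letter (x : ℕ × Bool) : ThompsonF := cond x.2 (xF x.1) (xF x.1)⁻¹

def evalWord (w : List (ℕ × Bool)) : ThompsonF := (w.map letter).prod

@[simp] theorem evalWord_nil : evalWord [] = 1 := rfl

@[simp] theorem evalWord_cons (x : ℕ × Bool) (w : List (ℕ × Bool)) :
    evalWord (x :: w) = letter x * evalWord w := rfl

theorem letter_mul_xF {i : ℕ} {x : ℕ × Bool} (h : i < x.1) :
    letter x * xF i = xF i * letter (x.1 + 1, x.2) := by
  have hconj := xF_inv_mul_xF_mul_xF h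
  obtain ⟨j, b⟩ := x
  cases b <;> simp only [letter, cond_true, cond_false] at hconj ⊢ <;> rw [← hconj] <;> group

theorem letter_mul_xF_pow {i : ℕ} {x : ℕ × Bool} (h : i < x.1) (n : ℕ) :
    letter x * xF i ^ n = xF i ^ n * letter (x.1 + n, x.2) := by
  induction n generalizing x with
  | zero => simp
  | succ n ih =>
    rw [pow_succ', ← mul_assoc, letter_mul_xF h, mul_assoc, ih (Nat.lt_succ_of_lt h),
      ← mul_assoc, ← pow_succ']
    simp only [Nat.add_right_comm _ 1 n, Nat.add_assoc]

theorem xF_inv_mul_evalWord {i : ℕ} {w : List (ℕ × Bool)} (h : ∀ x ∈ w, i < x.1) :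
    (xF i)⁻¹ * evalWord w = evalWord (w.map (Prod.map (· + 1) id)) * (xF i)⁻¹ := by
  induction w with
  | nil => simp
  | cons x w ih =>
    obtain ⟨hix, hw⟩ := List.forall_mem_cons.mp h
    have hx : (xF i)⁻¹ * letter x = letter (x.1 + 1, x.2) * (xF i)⁻¹ := by
      rw [inv_mul_eq_iff_eq_mul, ← mul_assoc, ← letter_mul_xF hix, mul_inv_cancel_right]
    rw [evalWord_cons, ← mul_assoc, hx, mul_assoc, ih hw, List.map_cons, evalWord_cons, mul_assoc]
    rfl

def Adjacent (i j : ℕ) : Prop := j = i + 1 ∨ i = j + 1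

theorem isChain_adjacent_map_add_one {l : List ℕ} :
    (l.map (· + 1)).IsChain Adjacent ↔ l.IsChain Adjacent := by
  simp only [List.isChain_map, Adjacent, Nat.add_right_cancel_iff]
  rfl

/-- The word left over after pushing the letters `x_m` of `w` to the left and the letters `x_m⁻¹`
to the right. -/
def core (m : ℕ) : List (ℕ × Bool) → List (ℕ × Bool)
  | [] => []
  | (i, b) :: w =>
    if i = m then cond b (core m w) ((core m w).map (Prod.map (· + 1) id))
    else (i + w.count (m, true), b) :: core m w

section core

variable {m : ℕ} {w : List (ℕ × Bool)}

theorem lt_of_mem_core (hw : ∀ x ∈ w, m ≤ x.1) : ∀ x ∈ core m w, m < x.1 := by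
  induction w with
  | nil => simp [core]
  | cons x w ih =>
    obtain ⟨i, b⟩ := x
    rw [List.forall_mem_cons] at hw
    obtain ⟨hi, hw⟩ := hw
    have ih := ih hw
    by_cases him : i = m
    · rw [core, if_pos him]
      cases b
      · rw [cond_false, List.forall_mem_map]
        exact fun y hy => Nat.lt_succ_of_lt (ih y hy)
      · exact ih
    · rw [core, if_neg him, List.forall_mem_cons]
      exact ⟨by omega, ih⟩

theorem length_core_add_countP (m : ℕ) (w : List (ℕ × Bool)) :
    (core m w).length + w.countP (·.1 = m) = w.length := by
  induction w with
  | nil => simp [core]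
  | cons x w ih =>
    obtain ⟨i, b⟩ := x
    by_cases him : i = m
    · have hlen : (core m ((i, b) :: w)).length = (core m w).length := by
        cases b <;> simp [core, him]
      rw [hlen, List.countP_cons_of_pos (by simpa using him), List.length_cons, ← ih, add_assoc]
    · rw [core, if_neg him, List.countP_cons_of_neg (by simpa using him), List.length_cons,
        List.length_cons, ← ih, Nat.add_right_comm]

theorem evalWord_eq_conj_core (hw : ∀ x ∈ w, m ≤ x.1) :
    evalWord w =
      xF m ^ w.count (m, true) * evalWord (core m w) * (xF m ^ w.count (m, false))⁻¹ := by
  induction w with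
  | nil => simp [core]
  | cons x w ih =>
    obtain ⟨i, b⟩ := x
    rw [List.forall_mem_cons] at hw
    obtain ⟨hi, hw⟩ := hw
    rw [evalWord_cons, ih hw]
    rcases hi.eq_or_lt with rfl | hi
    · cases b
      · set P := w.count (m, true)
        set N := w.count (m, false)
        have hcount : ((m, false) :: w).count (m, true) = P ∧
            ((m, false) :: w).count (m, false) = N + 1 := by simp [P, N]
        rw [hcount.1, hcount.2]
        calc (xF m)⁻¹ * (xF m ^ P * evalWord (core m w) * (xF m ^ N)⁻¹)
            = xF m ^ P * ((xF m)⁻¹ * evalWord (core m w)) * (xF m ^ N)⁻¹ := by group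
          _ = xF m ^ P * evalWord (core m ((m, false) :: w)) * (xF m ^ (N + 1))⁻¹ := by
            rw [xF_inv_mul_evalWord (lt_of_mem_core hw)]
            simp only [core, if_true, cond_false]
            group
      · simp [core, letter, pow_succ', mul_assoc]
    · simp [core, hi.ne', ← mul_assoc, letter_mul_xF_pow (x := (i, b)) hi]

-- `a` is the index of a letter preceding `w`; carrying it along controls the first letter of
-- `core m w` in the induction.
theorem isChain_cons_core {a : ℕ} (ha : m ≤ a) (hw : ∀ x ∈ w, m ≤ x.1)
    (h : (a :: w.map Prod.fst).IsChain Adjacent) :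
    ((a + w.count (m, true)) :: (core m w).map Prod.fst).IsChain Adjacent := by
  induction w generalizing a with
  | nil => simp [core]
  | cons x w ih =>
    obtain ⟨i, b⟩ := x
    rw [List.forall_mem_cons] at hw
    obtain ⟨hi, hw⟩ := hw
    rw [List.map_cons, List.isChain_cons_cons] at h
    obtain ⟨hai, h⟩ := h
    rcases hi.eq_or_lt with rfl | hi
    · have ha : a = m + 1 := by unfold Adjacent at hai; omega
      subst ha
      cases b
      · have hcore := ih le_rfl hw h
        have hshift : (m + 1 + ((m, false) :: w).count (m, true)) ::
            (core m ((m, false) :: w)).map Prod.fst =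
            ((m + w.count (m, true)) :: (core m w).map Prod.fst).map (· + 1) := by
          simp [core, Nat.add_right_comm]
        rwa [hshift, isChain_adjacent_map_add_one]
      · have h' : ((m + 2) :: w.map Prod.fst).IsChain Adjacent := by
          cases w with
          | nil => simp
          | cons y w =>
            rw [List.map_cons, List.isChain_cons_cons] at h ⊢
            have hy := hw y (by simp)
            exact ⟨by unfold Adjacent at h ⊢; omega, h.2⟩
        have hcore := ih (by omega) hw h'
        convert hcore using 2
        · rw [List.count_cons_self]; omega
        · simp [core]
    · rw [List.count_cons_of_ne (by simp [hi.ne']), core, if_neg hi.ne', List.map_cons,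
        List.isChain_cons_cons]
      exact ⟨by unfold Adjacent at hai ⊢; omega, ih hi.le hw h⟩

theorem isChain_core (hw : ∀ x ∈ w, m ≤ x.1) (h : (w.map Prod.fst).IsChain Adjacent) :
    ((core m w).map Prod.fst).IsChain Adjacent := by
  cases w with
  | nil => simp [core]
  | cons x w =>
    obtain ⟨i, b⟩ := x
    rw [List.forall_mem_cons] at hw
    have hcons := isChain_cons_core hw.1 hw.2 h
    by_cases him : i = m
    · rw [core, if_pos him]
      cases b
      · have hmap : ((core m w).map (Prod.map (· + 1) id)).map Prod.fst =
            ((core m w).map Prod.fst).map (· + 1) := by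
          simp [Function.comp_def]
        rw [cond_false, hmap, isChain_adjacent_map_add_one]
        exact hcons.tail
      · exact hcons.tail
    · rwa [core, if_neg him]

theorem forall_eq_of_core_eq_nil (h : core m w = []) : ∀ x ∈ w, x.1 = m := by
  have := length_core_add_countP m w
  rw [h, List.length_nil, zero_add, List.countP_eq_length] at this
  simpa using this

theorem length_core_lt (h : ∃ x ∈ w, x.1 = m) : (core m w).length < w.length := by
  have := length_core_add_countP m w
  have : 0 < w.countP (·.1 = m) := List.countP_pos_iff.2 (by simpa using h)
  omega

theorem core_ne_nil (hne : w ≠ []) (hw : (w.map Prod.fst).IsChain Adjacent)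
    (hcount : w.count (m, true) = w.count (m, false)) : core m w ≠ [] := by
  intro hnil
  have hall := forall_eq_of_core_eq_nil hnil
  rcases w with _ | ⟨⟨i, b⟩, _ | ⟨y, w⟩⟩
  · exact hne rfl
  · obtain rfl : i = m := hall (i, b) (by simp)
    cases b <;> simp at hcount
  · have hi : i = m := hall (i, b) (by simp)
    have hy : y.1 = m := hall y (by simp)
    simp only [List.map_cons, List.isChain_cons_cons, Adjacent] at hw
    omega

end core

def plGen (i : ℕ) : Equiv.Perm ℚ where
  toFun t := if t ≤ i - 1 then t else if t ≤ i + 1 then (t + i - 1) / 2 else t - 1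
  invFun t := if t ≤ i - 1 then t else if t ≤ i then 2 * t - i + 1 else t + 1
  left_inv t := by dsimp only; split_ifs <;> linarith
  right_inv t := by dsimp only; split_ifs <;> linarith

theorem plGen_apply (i : ℕ) (t : ℚ) :
    plGen i t = if t ≤ i - 1 then t else if t ≤ i + 1 then (t + i - 1) / 2 else t - 1 := rfl

theorem plGen_mul_plGen {i j : ℕ} (h : i < j) : plGen j * plGen i = plGen i * plGen (j + 1) := by
  have hij : (i : ℚ) + 1 ≤ j := by exact_mod_cast h
  ext t
  simp only [Equiv.Perm.mul_apply, plGen_apply]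
  push_cast
  split_ifs <;> linarith

def action : ThompsonF →* Equiv.Perm ℚ :=
  PresentedGroup.toGroup (f := plGen) <| by
    rintro _ ⟨i, j, h, rfl⟩
    simp only [map_mul, map_inv, FreeGroup.lift_apply_of]
    rw [mul_inv_eq_one, mul_assoc, plGen_mul_plGen h, inv_mul_cancel_left]

@[simp] theorem action_xF (i : ℕ) : action (xF i) = plGen i := PresentedGroup.toGroup.of _

theorem plGen_apply_of_le {i : ℕ} {t : ℚ} (h : t ≤ i - 1) : plGen i t = t := by
  rw [plGen_apply, if_pos h]

theorem plGen_inv_apply_of_le {i : ℕ} {t : ℚ} (h : t ≤ i - 1) : (plGen i)⁻¹ t = t := by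
  rw [Equiv.Perm.inv_eq_iff_eq, plGen_apply_of_le h]

theorem plGen_apply_near (m : ℕ) {e : ℤ} (he : e ≤ 1) :
    plGen m (m - 1 + 2 ^ e) = m - 1 + 2 ^ (e - 1) := by
  have hpos : (0 : ℚ) < 2 ^ e := by positivity
  have hle : (2 : ℚ) ^ e ≤ 2 := by
    simpa using zpow_le_zpow_right₀ (by norm_num : (1 : ℚ) ≤ 2) he
  rw [plGen_apply, if_neg (by linarith), if_pos (by linarith), zpow_sub_one₀ two_ne_zero]
  ring

theorem plGen_inv_apply_near (m : ℕ) {e : ℤ} (he : e ≤ 0) :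
    (plGen m)⁻¹ (m - 1 + 2 ^ e) = m - 1 + 2 ^ (e + 1) := by
  rw [Equiv.Perm.inv_eq_iff_eq, plGen_apply_near m (by omega), add_sub_cancel_right]

theorem action_evalWord_near {m : ℕ} {w : List (ℕ × Bool)} (hw : ∀ x ∈ w, m ≤ x.1) {e : ℤ}
    (he : e + w.length ≤ 0) :
    action (evalWord w) (m - 1 + 2 ^ e) =
      m - 1 + 2 ^ (e - w.count (m, true) + w.count (m, false)) := by
  induction w with
  | nil => simp
  | cons x w ih =>
    obtain ⟨i, b⟩ := x
    rw [List.forall_mem_cons] at hw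
    obtain ⟨hi, hw⟩ := hw
    rw [List.length_cons, Nat.cast_succ] at he
    rw [evalWord_cons, map_mul, Equiv.Perm.mul_apply, ih hw (by omega)]
    set e' := e - w.count (m, true) + w.count (m, false) with he'_def
    have he' : e' ≤ -1 := by
      have := w.count_le_length (a := (m, false))
      omega
    rcases hi.eq_or_lt with rfl | hi
    · cases b
      · simp only [letter, cond_false, map_inv, action_xF]
        rw [plGen_inv_apply_near m (by omega), List.count_cons_self,
          List.count_cons_of_ne (by simp)]
        congr 2
        push_cast
        omega
      · simp only [letter, cond_true, action_xF]
        rw [plGen_apply_near m (by omega), List.count_cons_self, List.count_cons_of_ne (by simp)]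
        congr 2
        push_cast
        omega
    · have hpow : (2 : ℚ) ^ e' ≤ 1 := zpow_le_one_of_nonpos₀ (by norm_num) (by omega)
      have hfix : (m - 1 + 2 ^ e' : ℚ) ≤ i - 1 := by
        have : (m : ℚ) + 1 ≤ i := by exact_mod_cast hi
        linarith
      rw [List.count_cons_of_ne (by simp [hi.ne']), List.count_cons_of_ne (by simp [hi.ne']),
        ← he'_def]
      cases b
      · simp [letter, plGen_inv_apply_of_le hfix]
      · simp [letter, plGen_apply_of_le hfix]

theorem evalWord_ne_one_of_count_ne {m : ℕ} {w : List (ℕ × Bool)} (hw : ∀ x ∈ w, m ≤ x.1)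
    (hcount : w.count (m, true) ≠ w.count (m, false)) : evalWord w ≠ 1 := by
  intro h
  have hgerm := action_evalWord_near hw (e := -w.length) (by simp)
  rw [h, map_one, Equiv.Perm.one_apply, add_right_inj] at hgerm
  have := zpow_right_injective₀ (by norm_num : (0 : ℚ) < 2) (by norm_num) hgerm
  omega

theorem evalWord_ne_one (w : List (ℕ × Bool)) (hne : w ≠ [])
    (hw : (w.map Prod.fst).IsChain Adjacent) : evalWord w ≠ 1 := by
  obtain ⟨m, hmin, x₀, hx₀, hx₀m⟩ : ∃ m, (∀ x ∈ w, m ≤ x.1) ∧ ∃ x ∈ w, x.1 = m := by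
    have hex : ∃ m, ∃ x ∈ w, x.1 = m := ⟨_, w.head hne, List.head_mem hne, rfl⟩
    exact ⟨Nat.find hex, fun x hx => Nat.find_min' hex ⟨x, hx, rfl⟩, Nat.find_spec hex⟩
  by_cases hcount : w.count (m, true) = w.count (m, false)
  · have hlt := length_core_lt ⟨x₀, hx₀, hx₀m⟩
    intro h
    rw [evalWord_eq_conj_core hmin, hcount, conj_eq_one_iff] at h
    exact evalWord_ne_one (core m w) (core_ne_nil hne hw hcount) (isChain_core hmin hw) h
  · exact evalWord_ne_one_of_count_ne hmin hcount
termination_by w.length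

end Thompson

/-- If `w = a_1 ⋯ a_k` is a nonempty word in which each letter `a_s` is `x_{r_s}` or
`x_{r_s}⁻¹`, and consecutive indices differ by exactly one, then `w` represents a
nontrivial element of Thompson's group `F`. -/
theorem nontrivial_of_consecutive_indices (k : ℕ) (hk : 1 ≤ k)
    (r : Fin k → ℕ) (ε : Fin k → ℤ) (hε : ∀ s : Fin k, ε s = 1 ∨ ε s = -1)
    (hstep : ∀ (s : Fin k) (h : (s : ℕ) + 1 < k),
      r ⟨(s : ℕ) + 1, h⟩ = r s + 1 ∨ r ⟨(s : ℕ) + 1, h⟩ + 1 = r s) :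
    (List.ofFn (fun s : Fin k => xF (r s) ^ ε s)).prod ≠ 1 := by
  let w := List.ofFn fun s => (r s, decide (ε s = 1))
  have hw : (w.map Prod.fst).IsChain Thompson.Adjacent := by
    simp only [w, List.map_ofFn, List.isChain_ofFn, Function.comp_apply, Thompson.Adjacent]
    exact fun i hi => (hstep ⟨i, by omega⟩ hi).imp id Eq.symm
  have heval : (List.ofFn fun s => xF (r s) ^ ε s).prod = Thompson.evalWord w := by
    simp only [Thompson.evalWord, w, List.map_ofFn]
    congr 2
    funext s
    rcases hε s with h | h <;> simp [h, Thompson.letter]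
  rw [heval]
  exact Thompson.evalWord_ne_one w (by simp only [w, ne_eq, List.ofFn_eq_nil_iff]; omega) hw
end

section
/- Fix i ∈ ℕ and let w = a_1 a_2 ⋯ a_k be a word in which each letter a_s equals x_{r_s}^{ε_s} with ε_s ∈ {1, −1} and r_s ≥ i for all s. If w represents the identity element of Thompson's group F, then the exponent sum of x_i in w is zero, i.e. Σ_{s : r_s = i} ε_s = 0. -/
/-!
Thompson's group `F` acts on Cantor space `{0,1}^ℕ`: `x_0` sends `0s ↦ 00s`, `10s ↦ 01s`,
`11s ↦ 1s`, and `x_{n+1}` fixes `0s` and sends `1s ↦ 1 x_n(s)`. On the points `1^i 0^m 1^∞` with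
`m ≥ 2`, `x_i` inserts a zero, `x_i⁻¹` deletes one, and every `x_j` with `j > i` acts trivially.
Hence a word of length `k` in the `x_j`, `j ≥ i`, moves `1^i 0^(k+2) 1^∞` to `1^i 0^(k+2+e) 1^∞`,
where `e` is the exponent sum of `x_i`; if the word is trivial in `F`, then `e = 0`.
-/

open Stream'

lemma Stream'.exists_eq_cons {α : Type*} (s : Stream' α) : ∃ a t, s = Stream'.cons a t :=
  ⟨s.head, s.tail, (Stream'.eta s).symm⟩

namespace ThompsonF

def splitHead : Stream' Bool ≃ Stream' Bool ⊕ Stream' Bool where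
  toFun s := bif s.head then .inr s.tail else .inl s.tail
  invFun := Sum.elim (false :: ·) (true :: ·)
  left_inv s := by
    rw [← Stream'.eta s]
    cases s.head <;> rfl
  right_inv x := by cases x <;> rfl

/-- `x_0` is the associator `C ⊕ (C ⊕ C) ≃ (C ⊕ C) ⊕ C` read through `C ≃ C ⊕ C`. -/
def cantorGen : ℕ → Equiv.Perm (Stream' Bool)
  | 0 => splitHead.trans <| (Equiv.sumCongr (.refl _) splitHead).trans <|
      (Equiv.sumAssoc _ _ _).symm.trans <| (Equiv.sumCongr splitHead.symm (.refl _)).trans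
        splitHead.symm
  | n + 1 => splitHead.trans <| (Equiv.sumCongr (.refl _) (cantorGen n)).trans splitHead.symm

section

variable (n : ℕ) (s : Stream' Bool)

@[simp] lemma cantorGen_zero_false : cantorGen 0 (false :: s) = false :: false :: s := rfl
@[simp] lemma cantorGen_zero_true_false :
    cantorGen 0 (true :: false :: s) = false :: true :: s := rfl
@[simp] lemma cantorGen_zero_true_true : cantorGen 0 (true :: true :: s) = true :: s := rfl
@[simp] lemma cantorGen_succ_false : cantorGen (n + 1) (false :: s) = false :: s := rfl
@[simp] lemma cantorGen_succ_true :
    cantorGen (n + 1) (true :: s) = true :: cantorGen n s := rfl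

end

lemma cantorGen_mul_cantorGen_of_lt {a b : ℕ} (hab : a < b) :
    cantorGen b * cantorGen a = cantorGen a * cantorGen (b + 1) := by
  obtain ⟨b, rfl⟩ := Nat.exists_eq_add_of_lt hab
  induction a generalizing b with
  | zero =>
    ext1 s
    obtain ⟨_ | _, t, rfl⟩ := exists_eq_cons s
    · simp
    obtain ⟨_ | _, t, rfl⟩ := exists_eq_cons t <;> simp
  | succ a ih =>
    ext1 s
    obtain ⟨_ | _, t, rfl⟩ := exists_eq_cons s
    · simp
    · simpa [add_right_comm a 1 b] using congr(true :: $(ih (b := b) (by omega)) t)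

def toCantorPerm : ThompsonF →* Equiv.Perm (Stream' Bool) :=
  PresentedGroup.toGroup (f := cantorGen) <| by
    rintro _ ⟨a, b, hab, rfl⟩
    simp only [map_mul, map_inv, FreeGroup.lift_apply_of]
    rw [mul_inv_eq_one, mul_assoc, inv_mul_eq_iff_eq_mul, cantorGen_mul_cantorGen_of_lt hab]

@[simp] lemma toCantorPerm_xF (n : ℕ) : toCantorPerm (xF n) = cantorGen n :=
  PresentedGroup.toGroup.of _

lemma cantorGen_add_replicate_true (i j : ℕ) (s : Stream' Bool) :
    cantorGen (i + j) (List.replicate i true ++ₛ s) = List.replicate i true ++ₛ cantorGen j s := by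
  induction i with
  | zero => simp
  | succ i ih => simp [List.replicate_succ, cons_append_stream, Nat.succ_add, ih]

def cantorPoint (i m : ℕ) : Stream' Bool :=
  List.replicate i true ++ₛ (List.replicate m false ++ₛ const true)

lemma cantorGen_cantorPoint_self (i m : ℕ) :
    cantorGen i (cantorPoint i (m + 1)) = cantorPoint i (m + 2) := by
  simpa [cantorPoint, List.replicate_succ, cons_append_stream] using
    cantorGen_add_replicate_true i 0 (List.replicate (m + 1) false ++ₛ const true)

lemma cantorGen_cantorPoint_of_lt {i j : ℕ} (hij : i < j) (m : ℕ) :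
    cantorGen j (cantorPoint i (m + 1)) = cantorPoint i (m + 1) := by
  obtain ⟨j, rfl⟩ := Nat.exists_eq_add_of_lt hij
  simpa [cantorPoint, List.replicate_succ, cons_append_stream, ← add_assoc] using
    cantorGen_add_replicate_true i (j + 1) (List.replicate (m + 1) false ++ₛ const true)

lemma cantorPoint_injective (i : ℕ) : Function.Injective (cantorPoint i) := by
  intro m m' h
  simp only [cantorPoint, append_right_inj] at h
  induction m generalizing m' with
  | zero =>
    cases m' with
    | zero => rfl
    | succ m' => simpa [List.replicate_succ, cons_append_stream] using congrArg head h
  | succ m ih =>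
    cases m' with
    | zero => simpa [List.replicate_succ, cons_append_stream] using congrArg head h
    | succ m' =>
      simpa using ih (by simpa [List.replicate_succ, cons_append_stream] using congrArg tail h)

lemma zpow_cantorGen_cantorPoint {i r m : ℕ} {e : ℤ} (hr : i ≤ r) (he : e = 1 ∨ e = -1)
    (hm : 2 ≤ m) :
    ∃ m' : ℕ, (cantorGen r ^ e) (cantorPoint i m) = cantorPoint i m' ∧
      (m' : ℤ) = m + if r = i then e else 0 := by
  obtain ⟨m, rfl⟩ := Nat.exists_eq_add_of_le' hm
  rcases hr.eq_or_lt with rfl | hlt <;> rcases he with rfl | rfl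
  · exact ⟨m + 3, cantorGen_cantorPoint_self _ (m + 1), by rw [if_pos rfl]; omega⟩
  · refine ⟨m + 1, ?_, by rw [if_pos rfl]; omega⟩
    rw [zpow_neg_one, Equiv.Perm.inv_eq_iff_eq, cantorGen_cantorPoint_self]
  · exact ⟨m + 2, cantorGen_cantorPoint_of_lt hlt (m + 1), by rw [if_neg hlt.ne']; omega⟩
  · refine ⟨m + 2, ?_, by rw [if_neg hlt.ne']; omega⟩
    rw [zpow_neg_one, Equiv.Perm.inv_eq_iff_eq, cantorGen_cantorPoint_of_lt hlt (m + 1)]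

lemma prod_ofFn_zpow_cantorGen_cantorPoint {i k : ℕ} (r : Fin k → ℕ) (ε : Fin k → ℤ)
    (hε : ∀ s, ε s = 1 ∨ ε s = -1) (hr : ∀ s, i ≤ r s) {m : ℕ} (hm : k + 2 ≤ m) :
    ∃ m' : ℕ, (List.ofFn fun s => cantorGen (r s) ^ ε s).prod (cantorPoint i m) =
        cantorPoint i m' ∧ (m' : ℤ) = m + ∑ s, if r s = i then ε s else 0 := by
  induction k with
  | zero => exact ⟨m, by simp⟩
  | succ k ih =>
    obtain ⟨m₁, h₁, hm₁⟩ := ih (fun s => r s.succ) (fun s => ε s.succ) (fun s => hε _)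
      (fun s => hr _) (by omega)
    have hsum : -(k : ℤ) ≤ ∑ s : Fin k, if r s.succ = i then ε s.succ else 0 := by
      simpa using Finset.card_nsmul_le_sum Finset.univ
        (fun s : Fin k => if r s.succ = i then ε s.succ else 0) (-1) fun s _ => by
        split_ifs <;> rcases hε s.succ with h | h <;> omega
    obtain ⟨m', h', hm'⟩ := zpow_cantorGen_cantorPoint (hr 0) (hε 0) (show 2 ≤ m₁ by omega)
    refine ⟨m', ?_, ?_⟩
    · rw [List.ofFn_succ, List.prod_cons, Equiv.Perm.mul_apply, h₁, h']
    · rw [Fin.sum_univ_succ, hm', hm₁]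
      ring

end ThompsonF

open ThompsonF in
/-- If `w = a_1 ⋯ a_k` is a word in which each letter `a_s` is `x_{r_s}^{ε_s}` with
`ε_s = ±1` and `r_s ≥ i` for all `s`, and `w` represents the identity of Thompson's
group `F`, then the exponent sum of `x_i` in `w` is zero. -/
theorem exponent_sum_eq_zero_of_eq_one (i k : ℕ)
    (r : Fin k → ℕ) (ε : Fin k → ℤ) (hε : ∀ s : Fin k, ε s = 1 ∨ ε s = -1)
    (hr : ∀ s : Fin k, i ≤ r s)
    (hw : (List.ofFn (fun s : Fin k => xF (r s) ^ ε s)).prod = 1) :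
    (∑ s : Fin k, if r s = i then ε s else 0) = 0 := by
  obtain ⟨m, hm, hsum⟩ := prod_ofFn_zpow_cantorGen_cantorPoint r ε hε hr (le_refl (k + 2))
  have hperm : (List.ofFn fun s => cantorGen (r s) ^ ε s).prod = 1 := by
    simpa [map_list_prod, List.map_ofFn, Function.comp_def] using congrArg toCantorPerm hw
  rw [hperm, Equiv.Perm.one_apply] at hm
  have hm_eq := cantorPoint_injective i hm
  omega
end

section
/- Let p ≥ 3 be an integer and h = ⌊p/2⌋. Let m, s, n be natural numbers with 0 ≤ m < n and 0 ≤ s < n, let j be an integer, and let B be a real number with h + 2 < B. If the word length of t^{−m} a^{j} t^{s} in BS(1,p) satisfies l(t^{−m} a^{j} t^{s}) > B·n, then |j| > p^{((B/(h+2)) − 2)·n} (real exponentiation). -/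
/-- The single relator `t a t⁻¹ a^{-p}` of the Baumslag–Solitar group `BS(1,p)`,
where `a` is the image of `0 : Fin 2` and `t` is the image of `1 : Fin 2`. -/
def BSRel (p : ℤ) : Set (FreeGroup (Fin 2)) :=
  {FreeGroup.of 1 * FreeGroup.of 0 * (FreeGroup.of 1)⁻¹ * (FreeGroup.of 0) ^ (-p)}

/-- The Baumslag–Solitar group `BS(1,p) = ⟨a, t ∣ t a t⁻¹ = a^p⟩`. -/
abbrev BS (p : ℤ) : Type := PresentedGroup (BSRel p)

/-- The generator `a` of `BS(1,p)`. -/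
def BSa (p : ℤ) : BS p := PresentedGroup.of 0

/-- The generator `t` of `BS(1,p)`. -/
def BSt (p : ℤ) : BS p := PresentedGroup.of 1

/-- The word length of `g ∈ BS(1,p)` with respect to the generating set
`{a, a⁻¹, t, t⁻¹}`: the least `n` such that `g` is a product of `n` generators. -/
noncomputable def BSlength (p : ℤ) (g : BS p) : ℕ :=
  sInf {n : ℕ | ∃ w : List (BS p), w.length = n ∧
    (∀ x ∈ w, x = BSa p ∨ x = (BSa p)⁻¹ ∨ x = BSt p ∨ x = (BSt p)⁻¹) ∧ w.prod = g}

/-- `g` can be written as a product of `n` generators. -/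
def BSHasWord (p : ℤ) (g : BS p) (n : ℕ) : Prop :=
  ∃ w : List (BS p), w.length = n ∧
    (∀ x ∈ w, x = BSa p ∨ x = (BSa p)⁻¹ ∨ x = BSt p ∨ x = (BSt p)⁻¹) ∧ w.prod = g

lemma BSlength_le (p : ℤ) {g : BS p} {n : ℕ} (h : BSHasWord p g n) : BSlength p g ≤ n :=
  Nat.sInf_le h

lemma BSHasWord_mul (p : ℤ) {g g' : BS p} {n n' : ℕ} (h : BSHasWord p g n)
    (h' : BSHasWord p g' n') : BSHasWord p (g * g') (n + n') := by
  obtain ⟨w, hw, hmem, hprod⟩ := h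
  obtain ⟨w', hw', hmem', hprod'⟩ := h'
  refine ⟨w ++ w', by simp [hw, hw'], ?_, by simp [hprod, hprod']⟩
  intro x hx
  rcases List.mem_append.1 hx with h | h
  exacts [hmem x h, hmem' x h]

lemma BSHasWord_zpow (p : ℤ) {x : BS p}
    (hx : x = BSa p ∨ x = (BSa p)⁻¹ ∨ x = BSt p ∨ x = (BSt p)⁻¹) (j : ℤ) :
    BSHasWord p (x ^ j) j.natAbs := by
  rcases le_or_gt 0 j with hj | hj
  · refine ⟨List.replicate j.natAbs x, by simp, ?_, ?_⟩
    · intro y hy; rw [List.eq_of_mem_replicate hy]; exact hx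
    · rw [List.prod_replicate, ← zpow_natCast, Int.natAbs_of_nonneg hj]
  · refine ⟨List.replicate j.natAbs x⁻¹, by simp, ?_, ?_⟩
    · intro y hy; rw [List.eq_of_mem_replicate hy]
      rcases hx with h | h | h | h <;> simp [h]
    · have habs : (j.natAbs : ℤ) = -j := by omega
      rw [List.prod_replicate, inv_pow, ← zpow_natCast, ← zpow_neg, habs, neg_neg]

lemma BS_rel (p : ℤ) : BSt p * BSa p * (BSt p)⁻¹ = (BSa p) ^ p := by
  have h1 : PresentedGroup.mk (BSRel p)
      (FreeGroup.of 1 * FreeGroup.of 0 * (FreeGroup.of 1)⁻¹ * (FreeGroup.of 0) ^ (-p)) = 1 := by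
    apply (QuotientGroup.eq_one_iff _).mpr
    exact Subgroup.subset_normalClosure rfl
  rw [map_mul, map_mul, map_mul, map_inv, map_zpow] at h1
  have h2 : BSt p * BSa p * (BSt p)⁻¹ * (BSa p) ^ (-p) = 1 := h1
  rw [zpow_neg] at h2
  exact mul_inv_eq_one.mp h2

lemma BS_conj_zpow (p q : ℤ) : BSt p * (BSa p) ^ q * (BSt p)⁻¹ = (BSa p) ^ (p * q) := by
  rw [← conj_zpow, BS_rel, ← zpow_mul]

lemma BS_key (p : ℤ) (hp : 3 ≤ p) : ∀ (k : ℕ) (j : ℤ), j.natAbs ≤ p.toNat ^ k →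
    ∃ N : ℕ, N ≤ (p.toNat / 2 + 2) * k + p.toNat / 2 ∧ BSHasWord p ((BSa p) ^ j) N := by
  intro k
  induction k with
  | zero =>
    intro j hj
    refine ⟨j.natAbs, ?_, BSHasWord_zpow p (Or.inl rfl) j⟩
    simp only [pow_zero] at hj
    omega
  | succ k ih =>
    intro j hj
    have hp0 : (0:ℤ) < p := by omega
    set h : ℤ := p / 2 with hh
    set q : ℤ := (j + h) / p with hq
    set r : ℤ := j - p * q with hr
    have hmod1 : 0 ≤ (j + h) % p := Int.emod_nonneg _ (by omega)
    have hmod2 : (j + h) % p < p := Int.emod_lt_of_pos _ hp0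
    have hmod3 : (j + h) % p = (j + h) - p * q := by rw [hq]; exact Int.emod_def _ _
    have hrh : r.natAbs ≤ p.toNat / 2 := by omega
    -- bound on q
    have hpt : ((p.toNat : ℤ)) = p := Int.toNat_of_nonneg hp0.le
    have habs : |j| ≤ p ^ (k+1) := by
      rw [Int.abs_eq_natAbs]
      calc (j.natAbs : ℤ) ≤ ((p.toNat ^ (k+1) : ℕ) : ℤ) := by exact_mod_cast hj
        _ = p ^ (k+1) := by push_cast [hpt]; ring
    have hj1 : j ≤ p ^ (k+1) := (abs_le.mp habs).2
    have hj2 : -(p ^ (k+1)) ≤ j := (abs_le.mp habs).1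
    have hps : p ^ (k+1) = p ^ k * p := pow_succ p k
    have hub : q < p ^ k + 1 := by
      rw [hq, Int.ediv_lt_iff_lt_mul hp0]
      have : h < p := by omega
      nlinarith
    have hlb : -(p ^ k) ≤ q := by
      rw [hq, Int.le_ediv_iff_mul_le hp0]
      have : 0 ≤ h := by omega
      nlinarith
    have hqb : q.natAbs ≤ p.toNat ^ k := by
      have h1 : |q| ≤ p ^ k := abs_le.mpr ⟨hlb, by omega⟩
      rw [Int.abs_eq_natAbs] at h1
      have h2 : (p:ℤ) ^ k = ((p.toNat ^ k : ℕ) : ℤ) := by push_cast [hpt]; ring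
      rw [h2] at h1
      exact_mod_cast h1
    obtain ⟨N, hN, hwq⟩ := ih q hqb
    have hgid : (BSa p) ^ j = (BSa p) ^ r * (BSt p * (BSa p) ^ q * (BSt p)⁻¹) := by
      rw [BS_conj_zpow, ← zpow_add]
      congr 1
      rw [hr]; ring
    have wt : BSHasWord p (BSt p) 1 := ⟨[BSt p], rfl, by simp, by simp⟩
    have wt' : BSHasWord p (BSt p)⁻¹ 1 := ⟨[(BSt p)⁻¹], rfl, by simp, by simp⟩
    have wr := BSHasWord_zpow p (Or.inl rfl) r
    have wfull := BSHasWord_mul p wr (BSHasWord_mul p (BSHasWord_mul p wt hwq) wt')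
    rw [← hgid] at wfull
    refine ⟨r.natAbs + (1 + N + 1), ?_, wfull⟩
    have hexp : (p.toNat / 2 + 2) * (k+1) + p.toNat / 2
        = ((p.toNat / 2 + 2) * k + p.toNat / 2) + (p.toNat / 2 + 2) := by ring
    omega

/-- If `0 ≤ m < n`, `0 ≤ s < n`, `h + 2 < B` (with `h = ⌊p/2⌋`), and the word length of
`t^{-m} a^j t^s` in `BS(1,p)` exceeds `B·n`, then `|j| > p^{(B/(h+2) - 2)·n}`. -/
theorem BS_length_lower_bound_implies_exponent (p : ℤ) (hp : 3 ≤ p)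
    (m s n : ℕ) (j : ℤ) (B : ℝ) (hm : m < n) (hs : s < n)
    (hB : ((p / 2 : ℤ) : ℝ) + 2 < B)
    (hl : B * (n : ℝ) <
      (BSlength p ((BSt p) ^ (-(m : ℤ)) * (BSa p) ^ j * (BSt p) ^ (s : ℤ)) : ℝ)) :
    (p : ℝ) ^ ((B / (((p / 2 : ℤ) : ℝ) + 2) - 2) * (n : ℝ)) < |(j : ℝ)| := by
  by_contra hc
  push_neg at hc
  have hp0 : (0:ℤ) < p := by omega
  set P : ℕ := p.toNat with hPdef
  set H : ℕ := P / 2 with hHdef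
  have hPp : ((P : ℤ)) = p := Int.toNat_of_nonneg hp0.le
  have hP3 : 3 ≤ P := by omega
  have hH1 : 1 ≤ H := by omega
  have hint : (p / 2 : ℤ) = ((H : ℕ) : ℤ) := by omega
  have hcast : ((p / 2 : ℤ) : ℝ) = (H : ℝ) := by rw [hint]; push_cast; rfl
  rw [hcast] at hB hc
  set HR : ℝ := (H : ℝ) with hHR
  set nR : ℝ := (n : ℝ) with hnR
  set c : ℝ := B / (HR + 2) - 2 with hcd
  have hH1R : (1:ℝ) ≤ HR := by rw [hHR]; exact_mod_cast hH1
  have hn1 : (1:ℝ) ≤ nR := by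
    rw [hnR]
    exact_mod_cast (by omega : 1 ≤ n)
  set k : ℕ := ⌈c * nR⌉₊ with hkdef
  have hp1 : (1:ℝ) ≤ (p:ℝ) := by exact_mod_cast (by omega : (1:ℤ) ≤ p)
  have h2 : (p:ℝ) ^ (c * nR) ≤ (p:ℝ) ^ ((k:ℕ) : ℝ) :=
    Real.rpow_le_rpow_of_exponent_le hp1 (Nat.le_ceil _)
  rw [Real.rpow_natCast] at h2
  have hjk : j.natAbs ≤ P ^ k := by
    have hje : (j.natAbs : ℝ) ≤ ((P ^ k : ℕ) : ℝ) := by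
      calc (j.natAbs : ℝ) = |(j:ℝ)| := by rw [Nat.cast_natAbs, Int.cast_abs]
        _ ≤ (p:ℝ) ^ (c * nR) := hc
        _ ≤ (p:ℝ) ^ k := h2
        _ = ((P ^ k : ℕ) : ℝ) := by
            push_cast
            rw [show ((P:ℝ)) = (p:ℝ) by exact_mod_cast hPp]
    exact_mod_cast hje
  obtain ⟨N, hN, hwa⟩ := BS_key p hp k j hjk
  have wm := BSHasWord_zpow p (Or.inr (Or.inr (Or.inl rfl))) (-(m:ℤ))
  have ws := BSHasWord_zpow p (Or.inr (Or.inr (Or.inl rfl))) (s:ℤ)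
  have hma : (-(m:ℤ)).natAbs = m := by simp
  have hsa : ((s:ℤ)).natAbs = s := by simp
  rw [hma] at wm
  rw [hsa] at ws
  have wfull := BSHasWord_mul p (BSHasWord_mul p wm hwa) ws
  have hlen := BSlength_le p wfull
  have hlR : B * nR < ((m + N + s : ℕ) : ℝ) :=
    lt_of_lt_of_le hl (by exact_mod_cast hlen)
  have hNR : (N:ℝ) ≤ (HR + 2) * (k:ℝ) + HR := by
    have : (N:ℝ) ≤ ((( H + 2) * k + H : ℕ) : ℝ) := by exact_mod_cast hN
    push_cast at this
    linarith
  have hmr : (m:ℝ) ≤ nR - 1 := by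
    have : (m:ℝ) + 1 ≤ nR := by rw [hnR]; exact_mod_cast hm
    linarith
  have hsr : (s:ℝ) ≤ nR - 1 := by
    have : (s:ℝ) + 1 ≤ nR := by rw [hnR]; exact_mod_cast hs
    linarith
  have hsum : B * nR < (nR - 1) + ((HR + 2) * (k:ℝ) + HR) + (nR - 1) := by
    push_cast at hlR
    linarith
  have hHpos : (0:ℝ) < HR + 2 := by linarith
  rcases le_or_gt (c * nR) 0 with hcn | hcn
  · have hk0 : k = 0 := by
      rw [hkdef]
      exact Nat.ceil_eq_zero.mpr hcn
    rw [hk0] at hsum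
    simp at hsum
    have hBn : (HR + 2) * nR < B * nR := by
      apply mul_lt_mul_of_pos_right hB
      linarith
    nlinarith [mul_nonneg (by linarith : (0:ℝ) ≤ HR) (by linarith : (0:ℝ) ≤ nR - 1)]
  · have hk' : (k:ℝ) < c * nR + 1 := Nat.ceil_lt_add_one hcn.le
    have hcc : (HR + 2) * c = B - 2 * (HR + 2) := by
      rw [hcd]
      field_simp
    have hexp : (HR + 2) * (c * nR + 1) = (B - 2 * (HR + 2)) * nR + (HR + 2) := by
      rw [mul_add, mul_one, ← mul_assoc, hcc]
    have hkb2 : (HR + 2) * (k:ℝ) ≤ (B - 2 * (HR + 2)) * nR + (HR + 2) := by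
      rw [← hexp]
      exact mul_le_mul_of_nonneg_left hk'.le hHpos.le
    have hZ : HR ≤ HR * nR := le_mul_of_one_le_right (by linarith) hn1
    linarith [hsum, hkb2, hZ, hn1]
end

section
/- Let p ≥ 3 be an integer. Let m, s, n be natural numbers with 0 ≤ m < n and 0 ≤ s < n, let j be an integer, and let E be a real number with 1 < E. If |j| > p^{E·n} (real exponentiation), then the word length of t^{−m} a^{j} t^{s} in BS(1,p) satisfies l(t^{−m} a^{j} t^{s}) > (E − 1)·n. -/
/-!
`BS(1,p)` acts on `ℝ` by affine maps, `a` as `x ↦ x + 1` and `t` as `x ↦ p x`. For `p ≥ 2` each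
generator maps a point of absolute value at most `B ≥ 1` to one of absolute value at most `p B`,
so `|g • 0| ≤ p ^ l(g)`. Since `t^{-m} a^j t^s` sends `0` to `p^{-m} j`, this gives
`|j| ≤ p ^ (l + m) < p ^ (l + n)`, and comparing with `|j| > p^{E n}` yields `l > (E - 1) n`.
-/

namespace BS

variable {p : ℤ}

def gens (p : ℤ) : Set (BS p) := {BSa p, (BSa p)⁻¹, BSt p, (BSt p)⁻¹}

theorem closure_gens : Submonoid.closure (gens p) = ⊤ := by
  have hrange : Set.range (PresentedGroup.of : Fin 2 → BS p) = {BSa p, BSt p} := by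
    ext x
    simp [Fin.exists_fin_two, BSa, BSt, eq_comm]
  have hgens : gens p = {BSa p, BSt p} ∪ {BSa p, BSt p}⁻¹ := by
    ext x
    simp only [gens, Set.inv_insert, Set.inv_singleton, Set.mem_union, Set.mem_insert_iff,
      Set.mem_singleton_iff]
    tauto
  rw [hgens, ← Subgroup.closure_toSubmonoid, ← hrange, PresentedGroup.closure_range_of]
  rfl

theorem exists_word_length_eq_BSlength (g : BS p) :
    ∃ w : List (BS p), w.length = BSlength p g ∧ (∀ x ∈ w, x ∈ gens p) ∧ w.prod = g := by
  obtain ⟨w, hw, rfl⟩ :=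
    Submonoid.exists_list_of_mem_closure (closure_gens ▸ Submonoid.mem_top g)
  exact Nat.sInf_mem
    (s := {n | ∃ v : List (BS p), v.length = n ∧ (∀ x ∈ v, x ∈ gens p) ∧ v.prod = w.prod})
    ⟨_, w, rfl, hw, rfl⟩

noncomputable def affineAction (hp : p ≠ 0) : BS p →* Equiv.Perm ℝ :=
  PresentedGroup.toGroup
    (f := ![Equiv.addRight 1, MulAction.toPerm (Units.mk0 (p : ℝ) (by exact_mod_cast hp))])
    (by rintro r rfl; ext x; simp)

section affineAction

variable (hp : p ≠ 0)

theorem affineAction_BSa_zpow_apply (k : ℤ) (x : ℝ) :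
    affineAction hp (BSa p ^ k) x = x + k := by
  simp [affineAction, BSa]

theorem affineAction_BSt_zpow_apply (k : ℤ) (x : ℝ) :
    affineAction hp (BSt p ^ k) x = (p : ℝ) ^ k * x := by
  rw [map_zpow, affineAction, BSt, PresentedGroup.toGroup.of, Matrix.cons_val_one,
    Matrix.cons_val_zero, ← MulAction.coe_toPermHom, ← map_zpow]
  simp [Units.smul_def]

theorem affineAction_conj_apply_zero (l j k : ℤ) :
    affineAction hp (BSt p ^ l * BSa p ^ j * BSt p ^ k) 0 = (p : ℝ) ^ l * j := by
  simp only [map_mul, Equiv.Perm.mul_apply, affineAction_BSt_zpow_apply, mul_zero,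
    affineAction_BSa_zpow_apply, zero_add]

variable {hp}

theorem abs_affineAction_gen_apply_le (hp2 : 2 ≤ p) {γ : BS p} (hγ : γ ∈ gens p) {B x : ℝ}
    (hB : 1 ≤ B) (hx : |x| ≤ B) : |affineAction hp γ x| ≤ p * B := by
  have hp2' : (2 : ℝ) ≤ p := by exact_mod_cast hp2
  have h2B : 2 * B ≤ p * B := mul_le_mul_of_nonneg_right hp2' (by linarith)
  rcases hγ with rfl | rfl | rfl | rfl
  · rw [← zpow_one (BSa p), affineAction_BSa_zpow_apply, Int.cast_one]
    linarith [abs_add_le x 1, abs_one (α := ℝ)]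
  · rw [← zpow_neg_one, affineAction_BSa_zpow_apply, Int.cast_neg, Int.cast_one]
    linarith [abs_add_le x (-1), abs_neg (1 : ℝ), abs_one (α := ℝ)]
  · rw [← zpow_one (BSt p), affineAction_BSt_zpow_apply, zpow_one, abs_mul,
      abs_of_pos (by linarith)]
    exact mul_le_mul_of_nonneg_left hx (by linarith)
  · rw [← zpow_neg_one, affineAction_BSt_zpow_apply, zpow_neg_one, abs_mul,
      abs_inv, abs_of_pos (by linarith), inv_mul_le_iff₀ (by linarith)]
    nlinarith

theorem abs_affineAction_list_prod_apply_le (hp2 : 2 ≤ p) {w : List (BS p)}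
    (hw : ∀ γ ∈ w, γ ∈ gens p) {B x : ℝ} (hB : 1 ≤ B) (hx : |x| ≤ B) :
    |affineAction hp w.prod x| ≤ (p : ℝ) ^ w.length * B := by
  induction w with
  | nil => simpa using hx
  | cons γ w ih =>
    have hpB : 1 ≤ (p : ℝ) ^ w.length * B :=
      one_le_mul_of_one_le_of_one_le (one_le_pow₀ (by exact_mod_cast (by omega : 1 ≤ p))) hB
    rw [List.prod_cons, map_mul, Equiv.Perm.mul_apply, List.length_cons, pow_succ', mul_assoc]
    exact abs_affineAction_gen_apply_le hp2 (hw γ List.mem_cons_self) hpB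
      (ih fun γ' h ↦ hw γ' (List.mem_cons_of_mem γ h))

theorem abs_affineAction_apply_zero_le (hp2 : 2 ≤ p) (g : BS p) :
    |affineAction hp g 0| ≤ (p : ℝ) ^ BSlength p g := by
  obtain ⟨w, hlen, hw, rfl⟩ := exists_word_length_eq_BSlength g
  simpa [hlen] using abs_affineAction_list_prod_apply_le hp2 hw le_rfl (by simp)

end affineAction

theorem abs_le_pow_BSlength_add (hp2 : 2 ≤ p) (m : ℕ) (j k : ℤ) :
    |(j : ℝ)| ≤ (p : ℝ) ^ (BSlength p (BSt p ^ (-(m : ℤ)) * BSa p ^ j * BSt p ^ k) + m) := by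
  have hp : p ≠ 0 := by omega
  have hp0 : (0 : ℝ) < p := by exact_mod_cast (by omega : 0 < p)
  have h := abs_affineAction_apply_zero_le (hp := hp) hp2
    (BSt p ^ (-(m : ℤ)) * BSa p ^ j * BSt p ^ k)
  rw [affineAction_conj_apply_zero, abs_mul, abs_of_pos (zpow_pos hp0 _), zpow_neg, zpow_natCast,
    inv_mul_le_iff₀ (pow_pos hp0 m)] at h
  rwa [pow_add, mul_comm]

end BS

theorem BS_exponent_implies_length_lower_bound_general (p : ℤ) (hp : 3 ≤ p)
    (m s n : ℕ) (j : ℤ) (E : ℝ) (hm : m < n)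
    (hj : (p : ℝ) ^ (E * (n : ℝ)) < |(j : ℝ)|) :
    (E - 1) * (n : ℝ) <
      (BSlength p ((BSt p) ^ (-(m : ℤ)) * (BSa p) ^ j * (BSt p) ^ (s : ℤ)) : ℝ) := by
  set L := BSlength p ((BSt p) ^ (-(m : ℤ)) * (BSa p) ^ j * (BSt p) ^ (s : ℤ))
  have hp1 : (1 : ℝ) < p := by exact_mod_cast (by omega : 1 < p)
  have hjL : (p : ℝ) ^ (E * n) < (p : ℝ) ^ ((L + m : ℕ) : ℝ) := by
    rw [Real.rpow_natCast]
    exact hj.trans_le (BS.abs_le_pow_BSlength_add (by omega) m j s)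
  have hEL : E * n < L + m := by exact_mod_cast (Real.rpow_lt_rpow_left_iff hp1).1 hjL
  have hmn : (m : ℝ) < n := by exact_mod_cast hm
  linarith

/-- If `0 ≤ m < n`, `0 ≤ s < n`, `1 < E`, and `|j| > p^{E·n}`, then the word length of
`t^{-m} a^j t^s` in `BS(1,p)` (for `p ≥ 3`) exceeds `(E - 1)·n`. -/
theorem BS_exponent_implies_length_lower_bound (p : ℤ) (hp : 3 ≤ p)
    (m s n : ℕ) (j : ℤ) (E : ℝ) (hm : m < n) (hs : s < n) (hE : 1 < E)
    (hj : (p : ℝ) ^ (E * (n : ℝ)) < |(j : ℝ)|) :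
    (E - 1) * (n : ℝ) <
      (BSlength p ((BSt p) ^ (-(m : ℤ)) * (BSa p) ^ j * (BSt p) ^ (s : ℤ)) : ℝ) :=
  BS_exponent_implies_length_lower_bound_general p hp m s n j E hm hj
end

section
/- Let p ≥ 8 be an integer, h = ⌊p/2⌋, and let C ≥ 1 be a natural number. Suppose k ≥ 0 is an integer and i_0, i_1, …, i_k are integers with |i_l| ≤ h for all 0 ≤ l ≤ k−1, 1 ≤ |i_k| ≤ h+1, and Σ_{l=0}^{k} i_l p^l = (h−2)·Σ_{l=0}^{C−1} p^l. Then k = C − 1 and i_l = h − 2 for every 0 ≤ l ≤ k. -/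
lemma geo_bound (p : ℤ) (hp : 8 ≤ p) (m : ℕ) :
    (p / 2) * ∑ l ∈ Finset.range m, p ^ l ≤ p ^ m - 1 := by
  have hg : (∑ l ∈ Finset.range m, p ^ l) * (p - 1) = p ^ m - 1 := geom_sum_mul p m
  have hS : 0 ≤ ∑ l ∈ Finset.range m, p ^ l :=
    Finset.sum_nonneg fun l _ => pow_nonneg (by linarith) l
  have h2 : 2 * (p / 2) ≤ p := by omega
  nlinarith

lemma aux_zero (p : ℤ) (hp : 8 ≤ p) (k : ℕ) (j : ℕ → ℤ)
    (hj : ∀ l < k, |j l| ≤ p / 2) (hjk : 1 ≤ |j k|) :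
    ∑ l ∈ Finset.range (k + 1), j l * p ^ l ≠ 0 := by
  intro h0
  rw [Finset.sum_range_succ] at h0
  have h1 : j k * p ^ k = -∑ l ∈ Finset.range k, j l * p ^ l := by linarith
  have hb : |j k * p ^ k| ≤ (p / 2) * ∑ l ∈ Finset.range k, p ^ l := by
    rw [h1, abs_neg]
    calc |∑ l ∈ Finset.range k, j l * p ^ l| ≤ ∑ l ∈ Finset.range k, |j l * p ^ l| :=
          Finset.abs_sum_le_sum_abs _ _
      _ ≤ ∑ l ∈ Finset.range k, (p / 2) * p ^ l := by
          refine Finset.sum_le_sum fun l hl => ?_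
          rw [abs_mul, abs_pow, abs_of_nonneg (by linarith : (0:ℤ) ≤ p)]
          exact mul_le_mul_of_nonneg_right (hj l (Finset.mem_range.mp hl))
            (pow_nonneg (by linarith) l)
      _ = (p / 2) * ∑ l ∈ Finset.range k, p ^ l := by rw [Finset.mul_sum]
  have hlow : (p : ℤ) ^ k ≤ |j k * p ^ k| := by
    rw [abs_mul, abs_pow, abs_of_nonneg (by linarith : (0:ℤ) ≤ p)]
    nlinarith [pow_nonneg (by linarith : (0:ℤ) ≤ p) k]
  have := geo_bound p hp k
  linarith

/-- Let `p ≥ 8` be an integer, `h = ⌊p/2⌋`, and `C ≥ 1` a natural number.  If `k ≥ 0`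
and `i_0, …, i_k` are integers with `|i_l| ≤ h` for `l < k`, `1 ≤ |i_k| ≤ h + 1`, and
`Σ_{l=0}^{k} i_l p^l = (h-2)·Σ_{l=0}^{C-1} p^l`, then `k = C - 1` and `i_l = h - 2`
for every `0 ≤ l ≤ k`. -/
theorem base_p_digits_unique (p : ℤ) (hp : 8 ≤ p) (C : ℕ) (hC : 1 ≤ C)
    (k : ℕ) (i : ℕ → ℤ)
    (hi : ∀ l < k, |i l| ≤ p / 2)
    (hik1 : 1 ≤ |i k|) (hik2 : |i k| ≤ p / 2 + 1)
    (hsum : ∑ l ∈ Finset.range (k + 1), i l * p ^ l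
          = (p / 2 - 2) * ∑ l ∈ Finset.range C, p ^ l) :
    k = C - 1 ∧ ∀ l ≤ k, i l = p / 2 - 2 := by
  have hp2 : (4:ℤ) ≤ p / 2 := by omega
  have h2p : 2 * (p / 2) ≤ p := by omega
  induction k generalizing C i with
  | zero =>
    simp only [zero_add, Finset.sum_range_one, pow_zero, mul_one] at hsum
    have hC1 : C = 1 := by
      by_contra hne
      have hC2 : 2 ≤ C := by omega
      have hge : (1:ℤ) + p ≤ ∑ l ∈ Finset.range C, p ^ l := by
        have : ∑ l ∈ Finset.range 2, p ^ l ≤ ∑ l ∈ Finset.range C, p ^ l := by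
          refine Finset.sum_le_sum_of_subset_of_nonneg ?_ fun l _ _ => pow_nonneg (by linarith) l
          exact Finset.range_subset_range.mpr hC2
        simpa [Finset.sum_range_succ] using this
      have := abs_le.mp hik2
      nlinarith
    subst hC1
    refine ⟨rfl, fun l hl => ?_⟩
    interval_cases l
    simpa using hsum
  | succ k IH =>
    obtain ⟨C', rfl⟩ : ∃ C', C = C' + 1 := ⟨C - 1, by omega⟩
    rw [Finset.sum_range_succ' (fun l => i l * p ^ l) (k + 1),
        Finset.sum_range_succ' (fun l => (p : ℤ) ^ l) C'] at hsum
    simp only [pow_zero, mul_one, pow_succ] at hsum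
    set S1 : ℤ := ∑ l ∈ Finset.range (k + 1), i (l + 1) * p ^ l with hS1
    set S2 : ℤ := ∑ l ∈ Finset.range C', p ^ l with hS2
    have hsum' : S1 * p + i 0 = (p / 2 - 2) * (S2 * p + 1) := by
      rw [hS1, hS2, Finset.sum_mul, Finset.sum_mul, ← hsum]
      congr 1
      exact Finset.sum_congr rfl fun l _ => by ring
    have hkey : i 0 - (p / 2 - 2) = ((p / 2 - 2) * S2 - S1) * p := by ring_nf; linarith
    have hi0 : |i 0| ≤ p / 2 := hi 0 (Nat.succ_pos k)
    have hD : (p / 2 - 2) * S2 - S1 = 0 := by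
      by_contra hne
      have h1 : (1:ℤ) ≤ |(p / 2 - 2) * S2 - S1| := Int.one_le_abs (by omega)
      have h2 : |((p / 2 - 2) * S2 - S1) * p| ≤ p - 2 := by
        rw [← hkey]
        have := abs_le.mp hi0
        rw [abs_le]; constructor <;> [linarith [abs_nonneg (i 0)]; skip]
        have : i 0 ≤ p / 2 := (abs_le.mp hi0).2
        linarith
      rw [abs_mul, abs_of_nonneg (by linarith : (0:ℤ) ≤ p)] at h2
      nlinarith
    have hi0eq : i 0 = p / 2 - 2 := by
      have := hkey; rw [hD, zero_mul] at this; linarith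
    have hS1eq : S1 = (p / 2 - 2) * S2 := by linarith
    have hC'pos : 1 ≤ C' := by
      by_contra hC0
      have : C' = 0 := by omega
      subst this
      simp only [Finset.range_zero, Finset.sum_empty] at hS2
      apply aux_zero p hp k (fun l => i (l + 1))
        (fun l hl => hi (l + 1) (by omega)) hik1
      rw [← hS1, hS1eq, hS2]; ring
    obtain ⟨hkC, hdig⟩ := IH C' hC'pos (fun l => i (l + 1))
      (fun l hl => hi (l + 1) (by omega)) hik1 hik2 (by exact hS1eq)
    refine ⟨by omega, fun l hl => ?_⟩
    cases l with
    | zero => exact hi0eq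
    | succ m => exact hdig m (by omega)
end
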